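/- Let C be a monoidal category and (A, μ, ι) an algebra in C such that there is a morphism ε : A → 𝟙 with ε ∘ ι = id_𝟙 and the functor A ⊗ − : C → C preserves epimorphisms. If every epimorphism in the category Mod_A of left A-modules splits, then every epimorphism in C splits. -/

import Mathlib

/-!
The free module `A ⊗ W` makes `A ⊗ f` a morphism of `A`-modules, and it is an epimorphism there
because it is already one in `C`; so it splits in `Mod_A`, in particular in `C`. Since `ι` and
`ε` exhibit `𝟙` as a retract of `A`, `f ≅ 𝟙 ⊗ f` is a retract of `A ⊗ f` in the arrow category,
and a retract of a split epimorphism is split.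
-/

open CategoryTheory MonoidalCategory

namespace CategoryTheory

variable {C : Type*} [Category C]

theorem RetractArrow.isSplitEpi {X Y Z W : C} {f : X ⟶ Y} {g : Z ⟶ W} (h : RetractArrow f g)
    [IsSplitEpi g] : IsSplitEpi f :=
  .mk' { section_ := h.i.right ≫ section_ g ≫ h.r.left
         id := by simp }

variable [MonoidalCategory C]

def Retract.retractArrowWhiskerLeft {A : C} (h : Retract (𝟙_ C) A) {W₁ W₂ : C} (f : W₁ ⟶ W₂) :
    RetractArrow f (A ◁ f) :=
  (Arrow.isoMk (λ_ W₁).symm (λ_ W₂).symm).retract.trans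
    (NatTrans.retractArrowApp ((tensoringRight C).map f) h)

section FreeModule

variable {A : C} (μ : A ⊗ A ⟶ A)

def freeAction (W : C) : A ⊗ (A ⊗ W) ⟶ A ⊗ W := (α_ A A W).inv ≫ (μ ⊗ₘ 𝟙 W)

lemma freeAction_unit {ι : 𝟙_ C ⟶ A} (unit_left : (ι ⊗ₘ 𝟙 A) ≫ μ = (λ_ A).hom) (W : C) :
    (ι ⊗ₘ 𝟙 (A ⊗ W)) ≫ freeAction μ W = (λ_ (A ⊗ W)).hom := by
  rw [freeAction, ← id_tensorHom_id, associator_inv_naturality_assoc, ← comp_tensor_id, unit_left]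
  monoidal_coherence

lemma freeAction_assoc (assoc : (𝟙 A ⊗ₘ μ) ≫ μ = (α_ A A A).inv ≫ (μ ⊗ₘ 𝟙 A) ≫ μ) (W : C) :
    (𝟙 A ⊗ₘ freeAction μ W) ≫ freeAction μ W =
      (α_ A A (A ⊗ W)).inv ≫ (μ ⊗ₘ 𝟙 (A ⊗ W)) ≫ freeAction μ W := by
  simp only [freeAction, id_tensorHom, tensorHom_id] at assoc ⊢
  rw [whiskerLeft_comp, Category.assoc, associator_inv_naturality_middle_assoc,
    ← comp_whiskerRight, assoc, associator_inv_naturality_left_assoc]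
  simp only [comp_whiskerRight, pentagon_inv_assoc]

lemma freeAction_naturality {W₁ W₂ : C} (f : W₁ ⟶ W₂) :
    freeAction μ W₁ ≫ (𝟙 A ⊗ₘ f) = (𝟙 A ⊗ₘ (𝟙 A ⊗ₘ f)) ≫ freeAction μ W₂ := by
  simp only [freeAction, id_tensorHom, tensorHom_id, Category.assoc]
  rw [← whisker_exchange, associator_inv_naturality_right_assoc]

end FreeModule
end CategoryTheory

theorem statement10_general {C : Type*} [Category C] [MonoidalCategory C]
    (A : C) (μ : A ⊗ A ⟶ A) (ι : 𝟙_ C ⟶ A)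
    (unit_left : (ι ⊗ₘ 𝟙 A) ≫ μ = (λ_ A).hom)
    (assoc : (𝟙 A ⊗ₘ μ) ≫ μ = (α_ A A A).inv ≫ (μ ⊗ₘ 𝟙 A) ≫ μ)
    (ε : A ⟶ 𝟙_ C) (hει : ι ≫ ε = 𝟙 (𝟙_ C))
    -- `A ⊗ −` preserves epimorphisms
    (hA : ∀ {X Y : C} (g : X ⟶ Y), Epi g → Epi (𝟙 A ⊗ₘ g))
    -- every epimorphism in Mod_A splits
    (hMod : ∀ (X1 X2 : C) (a1 : A ⊗ X1 ⟶ X1) (a2 : A ⊗ X2 ⟶ X2),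
      (ι ⊗ₘ 𝟙 X1) ≫ a1 = (λ_ X1).hom →
      (𝟙 A ⊗ₘ a1) ≫ a1 = (α_ A A X1).inv ≫ (μ ⊗ₘ 𝟙 X1) ≫ a1 →
      (ι ⊗ₘ 𝟙 X2) ≫ a2 = (λ_ X2).hom →
      (𝟙 A ⊗ₘ a2) ≫ a2 = (α_ A A X2).inv ≫ (μ ⊗ₘ 𝟙 X2) ≫ a2 →
      ∀ (f : X1 ⟶ X2), a1 ≫ f = (𝟙 A ⊗ₘ f) ≫ a2 →
      (∀ (X3 : C) (a3 : A ⊗ X3 ⟶ X3),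
        (ι ⊗ₘ 𝟙 X3) ≫ a3 = (λ_ X3).hom →
        (𝟙 A ⊗ₘ a3) ≫ a3 = (α_ A A X3).inv ≫ (μ ⊗ₘ 𝟙 X3) ≫ a3 →
        ∀ (g h : X2 ⟶ X3), a2 ≫ g = (𝟙 A ⊗ₘ g) ≫ a3 → a2 ≫ h = (𝟙 A ⊗ₘ h) ≫ a3 →
          f ≫ g = f ≫ h → g = h) →
      ∃ s : X2 ⟶ X1, a2 ≫ s = (𝟙 A ⊗ₘ s) ≫ a1 ∧ s ≫ f = 𝟙 X2) :
    ∀ {W1 W2 : C} (f : W1 ⟶ W2), Epi f → ∃ σ : W2 ⟶ W1, σ ≫ f = 𝟙 W2 := by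
  intro W₁ W₂ f hf
  have hAf : Epi (𝟙 A ⊗ₘ f) := hA f hf
  obtain ⟨s, -, hs⟩ := hMod _ _ (freeAction μ W₁) (freeAction μ W₂)
    (freeAction_unit μ unit_left W₁) (freeAction_assoc μ assoc W₁)
    (freeAction_unit μ unit_left W₂) (freeAction_assoc μ assoc W₂)
    (𝟙 A ⊗ₘ f) (freeAction_naturality μ f)
    (fun _ _ _ _ g h _ _ hgh => hAf.left_cancellation g h hgh)
  have : IsSplitEpi (A ◁ f) := .mk' ⟨s, by simpa using hs⟩
  have : IsSplitEpi f := (Retract.retractArrowWhiskerLeft ⟨ι, ε, hει⟩ f).isSplitEpi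
  exact ⟨section_ f, IsSplitEpi.id f⟩

/-- Let `C` be a monoidal category and `(A, μ, ι)` an algebra in `C` with a
morphism `ε : A ⟶ 𝟙` satisfying `ε ∘ ι = id` and such that `A ⊗ −` preserves epimorphisms.
If every epimorphism in `Mod_A` splits, then every epimorphism in `C` splits. -/
theorem statement10 {C : Type*} [Category C] [MonoidalCategory C]
    (A : C) (μ : A ⊗ A ⟶ A) (ι : 𝟙_ C ⟶ A)
    (unit_left : (ι ⊗ₘ 𝟙 A) ≫ μ = (λ_ A).hom)
    (unit_right : (𝟙 A ⊗ₘ ι) ≫ μ = (ρ_ A).hom)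
    (assoc : (𝟙 A ⊗ₘ μ) ≫ μ = (α_ A A A).inv ≫ (μ ⊗ₘ 𝟙 A) ≫ μ)
    (ε : A ⟶ 𝟙_ C) (hει : ι ≫ ε = 𝟙 (𝟙_ C))
    -- `A ⊗ −` preserves epimorphisms
    (hA : ∀ {X Y : C} (g : X ⟶ Y), Epi g → Epi (𝟙 A ⊗ₘ g))
    -- every epimorphism in Mod_A splits
    (hMod : ∀ (X1 X2 : C) (a1 : A ⊗ X1 ⟶ X1) (a2 : A ⊗ X2 ⟶ X2),
      (ι ⊗ₘ 𝟙 X1) ≫ a1 = (λ_ X1).hom →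
      (𝟙 A ⊗ₘ a1) ≫ a1 = (α_ A A X1).inv ≫ (μ ⊗ₘ 𝟙 X1) ≫ a1 →
      (ι ⊗ₘ 𝟙 X2) ≫ a2 = (λ_ X2).hom →
      (𝟙 A ⊗ₘ a2) ≫ a2 = (α_ A A X2).inv ≫ (μ ⊗ₘ 𝟙 X2) ≫ a2 →
      ∀ (f : X1 ⟶ X2), a1 ≫ f = (𝟙 A ⊗ₘ f) ≫ a2 →
      (∀ (X3 : C) (a3 : A ⊗ X3 ⟶ X3),
        (ι ⊗ₘ 𝟙 X3) ≫ a3 = (λ_ X3).hom →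
        (𝟙 A ⊗ₘ a3) ≫ a3 = (α_ A A X3).inv ≫ (μ ⊗ₘ 𝟙 X3) ≫ a3 →
        ∀ (g h : X2 ⟶ X3), a2 ≫ g = (𝟙 A ⊗ₘ g) ≫ a3 → a2 ≫ h = (𝟙 A ⊗ₘ h) ≫ a3 →
          f ≫ g = f ≫ h → g = h) →
      ∃ s : X2 ⟶ X1, a2 ≫ s = (𝟙 A ⊗ₘ s) ≫ a1 ∧ s ≫ f = 𝟙 X2) :
    ∀ {W1 W2 : C} (f : W1 ⟶ W2), Epi f → ∃ σ : W2 ⟶ W1, σ ≫ f = 𝟙 W2 :=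
  statement10_general A μ ι unit_left assoc ε hει hA hMod
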